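/- For every odd positive integer m and all integers n ≥ 0, r ≥ 0, one has ∑_{k=0}^{m−1} (−1)^k · A^{(r)}_{n,λ}((x+k)/m) = A^{(r)}_{n,mλ}(x) · (1/m)^{n−r}. -/

import Mathlib

open Finset

noncomputable section

/-- The generalized falling factorial `(x)_{n,λ} = x(x-λ)⋯(x-(n-1)λ)`. -/
def gff (lam x : ℝ) (n : ℕ) : ℝ := ∏ i ∈ Finset.range n, (x - i * lam)

/-- The ordinary falling factorial `(x)_r = x(x-1)⋯(x-r+1)` of a real number. -/
def ff (x : ℝ) (r : ℕ) : ℝ := ∏ i ∈ Finset.range r, (x - i)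

/-- The degenerate exponential `e_λ^x(t) = ∑_{n≥0} (x)_{n,λ} t^n/n!` as a formal power series. -/
def degExp (lam x : ℝ) : PowerSeries ℝ :=
  PowerSeries.mk fun n => gff lam x n / n.factorial

/-- `egfCoeff f n = a_n` when `f = ∑_{n≥0} a_n t^n/n!`. -/
def egfCoeff (f : PowerSeries ℝ) (n : ℕ) : ℝ := n.factorial * PowerSeries.coeff n f

/-- The formal binomial power `(1+g)^a = ∑_{k≥0} (a)_k/k! · g^k`,
intended for `g` with zero constant term (so the sum is coefficientwise finite). -/
def binomPow (a : ℝ) (g : PowerSeries ℝ) : PowerSeries ℝ :=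
  PowerSeries.mk fun n =>
    ∑ k ∈ Finset.range (n + 1), (ff a k / k.factorial) * PowerSeries.coeff n (g ^ k)

/-- `(2/(e_λ(t)+1))^α`, the `(-α)`-th formal binomial power of `(e_λ(t)+1)/2 = 1 + (e_λ(t)-1)/2`. -/
def eulerGF (lam a : ℝ) : PowerSeries ℝ :=
  binomPow (-a) (PowerSeries.C (R := ℝ) (1 / 2) * (degExp lam 1 - 1))

/-- Generalized degenerate Euler-Genocchi polynomials `A^{(r)}_{n,λ}(x)`, defined by
`∑_{n≥0} A^{(r)}_{n,λ}(x) t^n/n! = 2 t^r e_λ^x(t)/(e_λ(t)+1)`. -/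
def A (lam : ℝ) (r : ℕ) (x : ℝ) (n : ℕ) : ℝ :=
  egfCoeff (2 * PowerSeries.X ^ r * degExp lam x * (degExp lam 1 + 1)⁻¹) n

/-- Generalized degenerate Euler-Genocchi polynomials of order `α`, `A^{(r,α)}_{n,λ}(x)`,
defined by `∑_{n≥0} A^{(r,α)}_{n,λ}(x) t^n/n! = t^r (2/(e_λ(t)+1))^α e_λ^x(t)`. -/
def Aa (lam a : ℝ) (r : ℕ) (x : ℝ) (n : ℕ) : ℝ :=
  egfCoeff (PowerSeries.X ^ r * eulerGF lam a * degExp lam x) n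

/-- Degenerate Euler polynomials of order `α`:
`∑_{n≥0} E^{(α)}_{n,λ}(x) t^n/n! = (2/(e_λ(t)+1))^α e_λ^x(t)`. -/
def Epoly (lam a x : ℝ) (n : ℕ) : ℝ := egfCoeff (eulerGF lam a * degExp lam x) n

/-- Degenerate Euler polynomials `E_{n,λ}(x)`:
`∑_{n≥0} E_{n,λ}(x) t^n/n! = 2 e_λ^x(t)/(e_λ(t)+1)`. -/
def E1 (lam x : ℝ) (n : ℕ) : ℝ :=
  egfCoeff (2 * degExp lam x * (degExp lam 1 + 1)⁻¹) n

/-- Degenerate Euler numbers `E_{n,λ}`: `∑_{n≥0} E_{n,λ} t^n/n! = 2/(e_λ(t)+1)`. -/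
def Enum (lam : ℝ) (n : ℕ) : ℝ :=
  egfCoeff (2 * (degExp lam 1 + 1)⁻¹) n

/-- Degenerate Stirling numbers of the second kind:
`∑_{n≥k} S_{2,λ}(n,k) t^n/n! = (1/k!)(e_λ(t)-1)^k`. -/
def S2 (lam : ℝ) (n k : ℕ) : ℝ :=
  egfCoeff (PowerSeries.C (R := ℝ) (1 / k.factorial) * (degExp lam 1 - 1) ^ k) n

/-- Alternating degenerate power sum `T_{k,λ}(n) = ∑_{i=0}^n (-1)^i (i)_{k,λ}`. -/
def T (lam : ℝ) (k n : ℕ) : ℝ := ∑ i ∈ Finset.range (n + 1), (-1 : ℝ) ^ i * gff lam i k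

namespace AltSumAux

open PowerSeries

lemma gff_zero (lam x : ℝ) : gff lam x 0 = 1 := by simp [gff]

lemma gff_succ_left (lam x : ℝ) (n : ℕ) :
    gff lam x (n + 1) = x * gff lam (x - lam) n := by
  unfold gff
  rw [Finset.prod_range_succ']
  simp only [Nat.cast_zero, zero_mul, sub_zero, Nat.cast_add, Nat.cast_one]
  rw [mul_comm]
  congr 1
  apply Finset.prod_congr rfl
  intro i _
  push_cast
  ring

/-- Chu–Vandermonde for the generalized falling factorial. -/
lemma gff_add (lam : ℝ) : ∀ (n : ℕ) (x y : ℝ),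
    gff lam (x + y) n
      = ∑ k ∈ Finset.range (n + 1), (n.choose k : ℝ) * gff lam x k * gff lam y (n - k) := by
  intro n
  induction n with
  | zero => intro x y; simp [gff_zero]
  | succ n ih =>
    intro x y
    have h1 : gff lam (x + y) (n + 1)
        = x * gff lam ((x - lam) + y) n + y * gff lam (x + (y - lam)) n := by
      rw [gff_succ_left]
      have : x + y - lam = (x - lam) + y := by ring
      rw [this]
      have : x + (y - lam) = (x - lam) + y := by ring
      rw [this, ← add_mul]
    rw [h1, ih ((x - lam)) y, ih x (y - lam), Finset.mul_sum, Finset.mul_sum]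
    have hA : ∀ k, x * ((n.choose k : ℝ) * gff lam (x - lam) k * gff lam y (n - k))
        = (n.choose k : ℝ) * gff lam x (k + 1) * gff lam y (n - k) := by
      intro k; rw [gff_succ_left]; ring
    have hB : ∀ k ∈ Finset.range (n + 1),
        y * ((n.choose k : ℝ) * gff lam x k * gff lam (y - lam) (n - k))
        = (n.choose k : ℝ) * gff lam x k * gff lam y (n - k + 1) := by
      intro k _; rw [gff_succ_left]; ring
    rw [Finset.sum_congr rfl (fun k _ => hA k), Finset.sum_congr rfl hB]
    -- RHS: split off the k = 0 term via `sum_range_succ'`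
    rw [Finset.sum_range_succ' (fun k => ((n+1).choose k : ℝ) * gff lam x k * gff lam y (n + 1 - k))]
    -- second sum on the LHS: split similarly
    rw [Finset.sum_range_succ' (fun k => (n.choose k : ℝ) * gff lam x k * gff lam y (n - k + 1))]
    simp only [Nat.choose_zero_right, Nat.cast_one, gff_zero, Nat.sub_zero, Nat.choose_succ_succ,
      Nat.cast_add]
    have hsplit : ∀ k ∈ Finset.range (n + 1),
        ((n.choose k : ℝ) + (n.choose (k+1) : ℝ)) * gff lam x (k + 1) * gff lam y (n + 1 - (k + 1))
        = (n.choose k : ℝ) * gff lam x (k + 1) * gff lam y (n - k)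
          + (n.choose (k+1) : ℝ) * gff lam x (k + 1) * gff lam y (n - k) := by
      intro k hk
      have : n + 1 - (k + 1) = n - k := by omega
      rw [this]; ring
    rw [Finset.sum_congr rfl hsplit, Finset.sum_add_distrib]
    have hlast : ∑ k ∈ Finset.range (n + 1),
        (n.choose (k+1) : ℝ) * gff lam x (k + 1) * gff lam y (n - k)
        = ∑ k ∈ Finset.range n, (n.choose (k+1) : ℝ) * gff lam x (k + 1) * gff lam y (n - k) := by
      rw [Finset.sum_range_succ, Nat.choose_succ_self]
      simp
    have hright : ∀ k ∈ Finset.range n,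
        (n.choose (k+1) : ℝ) * gff lam x (k + 1) * gff lam y (n - (k + 1) + 1)
        = (n.choose (k+1) : ℝ) * gff lam x (k + 1) * gff lam y (n - k) := by
      intro k hk
      have : n - (k + 1) + 1 = n - k := by
        have := Finset.mem_range.mp hk; omega
      rw [this]
    rw [hlast, Finset.sum_congr rfl hright]
    push_cast
    ring

lemma degExp_mul (lam x y : ℝ) :
    degExp lam x * degExp lam y = degExp lam (x + y) := by
  ext n
  rw [PowerSeries.coeff_mul]
  rw [Finset.Nat.sum_antidiagonal_eq_sum_range_succ_mk]
  simp only [degExp, PowerSeries.coeff_mk]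
  rw [gff_add lam n x y, Finset.sum_div]
  apply Finset.sum_congr rfl
  intro k hk
  have hkn : k ≤ n := Nat.lt_succ_iff.mp (Finset.mem_range.mp hk)
  have hfact : (n.choose k : ℝ) * (k.factorial : ℝ) * ((n - k).factorial : ℝ)
      = (n.factorial : ℝ) := by
    rw [← Nat.cast_mul, ← Nat.cast_mul, Nat.choose_mul_factorial_mul_factorial hkn]
  have hk0 : (k.factorial : ℝ) ≠ 0 := Nat.cast_ne_zero.mpr (Nat.factorial_ne_zero k)
  have hnk0 : ((n - k).factorial : ℝ) ≠ 0 := Nat.cast_ne_zero.mpr (Nat.factorial_ne_zero _)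
  have hn0 : (n.factorial : ℝ) ≠ 0 := Nat.cast_ne_zero.mpr (Nat.factorial_ne_zero n)
  field_simp
  rw [← hfact]
  ring

lemma degExp_zero (lam : ℝ) : degExp lam 0 = 1 := by
  ext n
  simp only [degExp, PowerSeries.coeff_mk]
  cases n with
  | zero => simp [gff_zero]
  | succ n =>
    have : gff lam 0 (n + 1) = 0 := by
      unfold gff
      apply Finset.prod_eq_zero (Finset.mem_range.mpr (Nat.succ_pos n))
      simp
    rw [this]
    simp [PowerSeries.coeff_one]

lemma degExp_pow (lam : ℝ) (k : ℕ) : (degExp lam 1) ^ k = degExp lam (k : ℝ) := by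
  induction k with
  | zero => simpa using (degExp_zero lam).symm
  | succ k ih =>
    rw [pow_succ, ih, degExp_mul]
    push_cast
    ring_nf

lemma gff_scale (lam : ℝ) {m : ℝ} (hm : m ≠ 0) (y : ℝ) (n : ℕ) :
    gff lam (y / m) n = m⁻¹ ^ n * gff (m * lam) y n := by
  unfold gff
  have h1 : ∀ i ∈ Finset.range n, y / m - (i : ℝ) * lam = m⁻¹ * (y - i * (m * lam)) := by
    intro i _
    field_simp
  rw [Finset.prod_congr rfl h1, Finset.prod_mul_distrib, Finset.prod_const, Finset.card_range]

lemma rescale_degExp (lam : ℝ) {m : ℝ} (hm : m ≠ 0) (y : ℝ) :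
    PowerSeries.rescale m⁻¹ (degExp (m * lam) y) = degExp lam (y / m) := by
  unfold degExp
  rw [PowerSeries.rescale_mk]
  ext n
  simp only [PowerSeries.coeff_mk]
  rw [gff_scale lam hm y n]
  ring

lemma rescale_C (a c : ℝ) : PowerSeries.rescale a (PowerSeries.C (R := ℝ) c) = PowerSeries.C (R := ℝ) c := by
  ext n
  rw [PowerSeries.coeff_rescale, PowerSeries.coeff_C]
  split_ifs with h
  · subst h; simp
  · simp [PowerSeries.coeff_C, h]

lemma constantCoeff_degExp (lam x : ℝ) :
    PowerSeries.constantCoeff (degExp lam x) = 1 := by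
  rw [← PowerSeries.coeff_zero_eq_constantCoeff_apply]
  simp [degExp, gff_zero]

/-- The key power series identity. -/
lemma key (lam x : ℝ) (m : ℕ) (hm : 0 < m) (hodd : Odd m) (r : ℕ) :
    ∑ k ∈ Finset.range m, PowerSeries.C (R := ℝ) ((-1 : ℝ) ^ k)
        * (2 * PowerSeries.X ^ r * degExp lam ((x + k) / m) * (degExp lam 1 + 1)⁻¹)
      = PowerSeries.C (R := ℝ) ((m : ℝ) ^ r) * PowerSeries.rescale ((m : ℝ)⁻¹)
          (2 * PowerSeries.X ^ r * degExp ((m : ℝ) * lam) x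
            * (degExp ((m : ℝ) * lam) 1 + 1)⁻¹) := by
  have hmR : (m : ℝ) ≠ 0 := Nat.cast_ne_zero.mpr hm.ne'
  set μ : ℝ := (m : ℝ) * lam with hμ
  set z : ℝ⟦X⟧ := degExp μ 1 with hz
  set Rm : ℝ⟦X⟧ →+* ℝ⟦X⟧ := PowerSeries.rescale ((m : ℝ)⁻¹) with hRm
  set G : ℝ⟦X⟧ := degExp lam 1 + 1 with hG
  have hGc : PowerSeries.constantCoeff G ≠ 0 := by
    rw [hG, map_add, constantCoeff_degExp, map_one]
    norm_num
  have hGmc : PowerSeries.constantCoeff (z + 1) ≠ 0 := by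
    rw [hz, map_add, constantCoeff_degExp, map_one]
    norm_num
  have hW : Rm (z + 1) ≠ 0 := by
    intro h
    have : z + 1 = 0 := PowerSeries.rescale_injective (inv_ne_zero hmR) (by rw [h, map_zero])
    rw [this, map_zero] at hGmc
    exact hGmc rfl
  apply mul_right_cancel₀ hW
  -- rewrite each degExp lam ((x+k)/m)
  have hD : ∀ k : ℕ, degExp lam ((x + k) / m) = Rm (degExp μ x * z ^ k) := by
    intro k
    rw [hz, degExp_pow, degExp_mul, hRm, rescale_degExp lam hmR]
  -- geometric sum
  set S : ℝ⟦X⟧ := ∑ k ∈ Finset.range m, (-z) ^ k with hS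
  have hgeom : S * (z + 1) = z ^ m + 1 := by
    have h1 := geom_sum_mul (-z) m
    rw [hodd.neg_pow] at h1
    rw [hS]
    linear_combination -h1
  have hzm : Rm (z ^ m) = degExp lam 1 := by
    rw [hz, degExp_pow, hRm, rescale_degExp lam hmR, div_self hmR]
  -- LHS
  have hL : (∑ k ∈ Finset.range m, PowerSeries.C (R := ℝ) ((-1 : ℝ) ^ k)
        * (2 * PowerSeries.X ^ r * degExp lam ((x + k) / m) * G⁻¹))
      = (2 * PowerSeries.X ^ r * G⁻¹) * Rm (degExp μ x * S) := by
    have e1 : ∀ k ∈ Finset.range m, PowerSeries.C (R := ℝ) ((-1 : ℝ) ^ k)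
        * (2 * PowerSeries.X ^ r * degExp lam ((x + k) / m) * G⁻¹)
        = (2 * PowerSeries.X ^ r * G⁻¹) * Rm (PowerSeries.C (R := ℝ) ((-1 : ℝ) ^ k)
            * (degExp μ x * z ^ k)) := by
      intro k _
      rw [hD k]
      conv_rhs => rw [map_mul, rescale_C]
      ring
    rw [Finset.sum_congr rfl e1, ← Finset.mul_sum, ← map_sum]
    congr 2
    rw [hS, Finset.mul_sum]
    apply Finset.sum_congr rfl
    intro k _
    rw [map_pow, map_neg, map_one, neg_pow z]
    ring
  rw [hL]
  have hLW : (2 * PowerSeries.X ^ r * G⁻¹) * Rm (degExp μ x * S) * Rm (z + 1)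
      = 2 * PowerSeries.X ^ r * Rm (degExp μ x) := by
    have : Rm (degExp μ x * S) * Rm (z + 1) = Rm (degExp μ x) * G := by
      rw [← map_mul, mul_assoc, hgeom, map_mul, map_add, map_one, hzm, ← hG]
    rw [mul_assoc, this, ← mul_assoc]
    have hc : 2 * PowerSeries.X ^ r * G⁻¹ * Rm (degExp μ x) * G
        = 2 * PowerSeries.X ^ r * Rm (degExp μ x) * (G⁻¹ * G) := by ring
    rw [hc, PowerSeries.inv_mul_cancel _ hGc, mul_one]
  rw [hLW]
  -- RHS
  have hRW : PowerSeries.C (R := ℝ) ((m : ℝ) ^ r)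
        * Rm (2 * PowerSeries.X ^ r * degExp μ x * (z + 1)⁻¹) * Rm (z + 1)
      = 2 * PowerSeries.X ^ r * Rm (degExp μ x) := by
    rw [mul_assoc, ← map_mul]
    have h2 : 2 * PowerSeries.X ^ r * degExp μ x * (z + 1)⁻¹ * (z + 1)
        = 2 * PowerSeries.X ^ r * degExp μ x * ((z + 1)⁻¹ * (z + 1)) := by ring
    rw [h2, PowerSeries.inv_mul_cancel _ hGmc, mul_one, map_mul, map_mul]
    have hX : Rm (PowerSeries.X ^ r) = PowerSeries.C (R := ℝ) ((m : ℝ)⁻¹ ^ r) * PowerSeries.X ^ r := by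
      rw [map_pow, hRm, PowerSeries.rescale_X, mul_pow, ← map_pow]
    have h2' : Rm (2 : ℝ⟦X⟧) = 2 := by
      rw [map_ofNat]
    rw [hX, h2']
    rw [show PowerSeries.C (R := ℝ) ((m:ℝ) ^ r) * (2 * (PowerSeries.C (R := ℝ) ((m : ℝ)⁻¹ ^ r) * PowerSeries.X ^ r) * Rm (degExp μ x))
      = (PowerSeries.C (R := ℝ) ((m:ℝ) ^ r) * PowerSeries.C (R := ℝ) ((m : ℝ)⁻¹ ^ r)) * (2 * PowerSeries.X ^ r * Rm (degExp μ x)) from by ring]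
    rw [← map_mul]
    have : (m : ℝ) ^ r * (m : ℝ)⁻¹ ^ r = 1 := by
      rw [← mul_pow, mul_inv_cancel₀ hmR, one_pow]
    rw [this, map_one, one_mul]
  rw [hRW]

end AltSumAux

/-- equation (30) of the paper: for odd `m ∈ ℕ`, `m ≥ 1`, and `n, r ≥ 0`,
`∑_{k=0}^{m-1} (-1)^k A^{(r)}_{n,λ}((x+k)/m) = A^{(r)}_{n,mλ}(x) (1/m)^{n-r}`. -/
theorem alt_sum_A (lam : ℝ) (hlam : lam ≠ 0) (x : ℝ) (m : ℕ) (hm : 0 < m)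
    (hodd : Odd m) (n r : ℕ) :
    ∑ k ∈ Finset.range m, (-1 : ℝ) ^ k * A lam r ((x + k) / m) n =
      A (m * lam) r x n * ((1 : ℝ) / m) ^ ((n : ℤ) - (r : ℤ)) := by
  classical
  have hmR : (m : ℝ) ≠ 0 := Nat.cast_ne_zero.mpr hm.ne'
  have key := AltSumAux.key lam x m hm hodd r
  have hL : ∑ k ∈ Finset.range m, (-1 : ℝ) ^ k * A lam r ((x + k) / m) n
      = (n.factorial : ℝ) * PowerSeries.coeff n
          (∑ k ∈ Finset.range m, PowerSeries.C (R := ℝ) ((-1 : ℝ) ^ k)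
            * (2 * PowerSeries.X ^ r * degExp lam ((x + k) / m) * (degExp lam 1 + 1)⁻¹)) := by
    rw [map_sum, Finset.mul_sum]
    apply Finset.sum_congr rfl
    intro k _
    rw [PowerSeries.coeff_C_mul]
    show (-1 : ℝ) ^ k * egfCoeff _ n = _
    unfold egfCoeff
    ring
  rw [hL, key, PowerSeries.coeff_C_mul, PowerSeries.coeff_rescale]
  show (n.factorial : ℝ) * ((m : ℝ) ^ r * ((m : ℝ)⁻¹ ^ n * PowerSeries.coeff n _))
      = egfCoeff _ n * _
  unfold egfCoeff
  rw [one_div, zpow_sub₀ (inv_ne_zero hmR), zpow_natCast, zpow_natCast]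
  field_simp
  ring_nf
  rw [inv_pow, mul_assoc, mul_comm, mul_assoc, inv_mul_cancel₀ (pow_ne_zero _ hmR), mul_one]
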